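/- (Lemma 2) Let r > 0 and m = r^{−a}. Define π_{t,r}(u) = Σ_{k∈ℤ} p_t(u − 2rk) for u ∈ [−r,r], the density of the diffusion reflected at the edges of [−r,r]. Then π_{t,r}(u) = (1/r) π_{tm}(u/r) for u ∈ [−r,r], and for every t with tm ≥ 1, with K = ⌊tm⌋: sup_{u∈[−r,r]} |π_{t,r}(u) − 1/(2r)| ≤ (2/r) (1 − 4Q_1)^{K−1} · sup_{u∈[−2,2)} |P̄_1(u) − 1/4|. -/

import Mathlib

open MeasureTheory

/-- 4-periodization `P̄ₜ (u) = ∑ₖ pₜ (u - 4k)` of the family of densities `p`. -/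
noncomputable def Pbar (p : ℝ → ℝ → ℝ) (t u : ℝ) : ℝ := ∑' k : ℤ, p t (u - 4 * k)

/-- `Qₜ = inf_{u ∈ [-2,2)} P̄ₜ (u)`. -/
noncomputable def Qinf (p : ℝ → ℝ → ℝ) (t : ℝ) : ℝ := sInf (Pbar p t '' Set.Ico (-2 : ℝ) 2)

/-- `πₜ (u) = ∑ₖ pₜ (u - 2k)`, the density of the diffusion reflected at the edges
of `[-1,1]`. -/
noncomputable def piRefl (p : ℝ → ℝ → ℝ) (t u : ℝ) : ℝ := ∑' k : ℤ, p t (u - 2 * k)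

/-- `π_{t,r} (u) = ∑ₖ pₜ (u - 2rk)`, the density of the diffusion reflected at the
edges of `[-r,r]`. -/
noncomputable def piReflR (p : ℝ → ℝ → ℝ) (t r u : ℝ) : ℝ := ∑' k : ℤ, p t (u - 2 * r * k)

/-!
Rescaling space by `r` and time by `m = r^{-a}` maps `π_{t,r}` to `π_{tm}`, and splitting the
shifts `2k` into even and odd ones gives `π_τ(w) = P̄_τ(w) + P̄_τ(w - 2)`. So it suffices to show
that the density `P̄_τ` of the process wrapped onto the circle `ℝ/4ℤ` is within
`(1 - 4Q₁)^(⌊τ⌋ - 1) · sup |P̄₁ - 1/4|` of the uniform density `1/4`.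

On the circle the `P̄_t` form a convolution semigroup of probability densities, and the
minorisation `P̄_s ≥ Q_s` is a Doeblin condition: since `v ↦ P̄_t(u - v) - 1/4` has integral
zero, `P̄_{s+t}(u) - 1/4 = ∫ (P̄_s(v) - Q_s) (P̄_t(u - v) - 1/4) dv`, and `P̄_s - Q_s` has mass
`1 - 4Q_s`. Each unit of time thus contracts `sup |P̄ - 1/4|` by the factor `1 - 4Q₁`. The
supremum is finite because `P̄_t(u) ≤ P̄_t(0)`, by AM-GM applied to
`P̄_t = P̄_{t/2} ⋆ P̄_{t/2}` and evenness of `P̄_{t/2}`.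
-/

open MeasureTheory Set
open scoped ENNReal NNReal

theorem ENNReal.two_mul_le_add_sq (a b : ℝ≥0∞) : 2 * a * b ≤ a ^ 2 + b ^ 2 := by
  rcases eq_or_ne a ⊤ with rfl | ha
  · simp
  rcases eq_or_ne b ⊤ with rfl | hb
  · simp
  lift a to ℝ≥0 using ha
  lift b to ℝ≥0 using hb
  exact_mod_cast _root_.two_mul_le_add_sq a b

theorem HasSum.int_even_add_odd {M : Type*} [AddCommMonoid M] [TopologicalSpace M] [ContinuousAdd M]
    {f : ℤ → M} {a b : M} (he : HasSum (fun k ↦ f (2 * k)) a)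
    (ho : HasSum (fun k ↦ f (2 * k + 1)) b) : HasSum f (a + b) := by
  have := mul_right_injective₀ (two_ne_zero' ℤ)
  replace ho := ((add_left_injective 1).comp this).hasSum_range_iff.2 ho
  refine (this.hasSum_range_iff.2 he).add_isCompl ?_ ho
  simpa [Function.comp_def] using Int.isCompl_even_odd

theorem Function.periodic_tsum_comp_sub_int_mul {M : Type*} [AddCommMonoid M] [TopologicalSpace M]
    (g : ℝ → M) (T : ℝ) : Function.Periodic (fun u ↦ ∑' k : ℤ, g (u - T * k)) T := fun u ↦ by
  dsimp only
  rw [← (Equiv.addRight 1).tsum_eq]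
  refine tsum_congr fun k ↦ congrArg g ?_
  push_cast [Equiv.coe_addRight]
  ring

theorem lintegral_eq_tsum_setLIntegral_Ioc {T : ℝ} (hT : 0 < T) (a : ℝ) (f : ℝ → ℝ≥0∞) :
    ∫⁻ x, f x = ∑' k : ℤ, ∫⁻ x in Ioc a (a + T), f (x - T * k) := by
  rw [← setLIntegral_univ, ← iUnion_Ioc_add_zsmul hT a,
    lintegral_iUnion (fun _ ↦ measurableSet_Ioc) (pairwise_disjoint_Ioc_add_zsmul a T),
    ← (Equiv.neg ℤ).tsum_eq]
  refine tsum_congr fun k ↦ ?_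
  rw [(measurePreserving_sub_right volume (T * k)).setLIntegral_comp_emb
    (measurableEmbedding_subRight _) f, image_sub_const_Ioc]
  simp only [Equiv.neg_apply, zsmul_eq_mul, Int.cast_add, Int.cast_one, Int.cast_neg]
  congr 3 <;> ring

theorem Function.Periodic.setLIntegral_Ioc_const_sub {f : ℝ → ℝ≥0∞} {T : ℝ}
    (hf : Function.Periodic f T) (hT : 0 < T) (a c : ℝ) :
    ∫⁻ x in Ioc a (a + T), f (c - x) = ∫⁻ x in Ioc a (a + T), f x := by
  rw [(Measure.measurePreserving_sub_left volume c).setLIntegral_comp_emb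
    (MeasurableEquiv.subLeft c).measurableEmbedding f, image_const_sub_Ioc,
    setLIntegral_congr Ico_ae_eq_Ioc,
    show c - a = c - (a + T) + T by ring]
  refine (isAddFundamentalDomain_Ioc hT _).setLIntegral_eq (isAddFundamentalDomain_Ioc hT a) f ?_
  rintro ⟨_, k, rfl⟩ x
  simpa [add_comm] using hf.zsmul k x

theorem abs_integral_mul_le_of_integral_eq_zero {α : Type*} [MeasurableSpace α]
    {μ : Measure α} [IsFiniteMeasure μ] {f g : α → ℝ} {c M : ℝ} (hf : Integrable f μ)
    (hg : AEStronglyMeasurable g μ) (hg0 : ∫ x, g x ∂μ = 0) (hcf : ∀ x, c ≤ f x)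
    (hgM : ∀ x, |g x| ≤ M) :
    |∫ x, f x * g x ∂μ| ≤ (∫ x, f x ∂μ - c * μ.real univ) * M := by
  have hg_int : Integrable g μ := .of_bound hg M (ae_of_all _ hgM)
  have hfc : Integrable (fun x ↦ f x - c) μ := hf.sub (integrable_const c)
  have hfcg : Integrable (fun x ↦ (f x - c) * g x) μ := hfc.mul_bdd hg (ae_of_all _ hgM)
  have hshift : ∫ x, f x * g x ∂μ = ∫ x, (f x - c) * g x ∂μ := by
    simp_rw [sub_mul]
    rw [integral_sub (hf.mul_bdd hg (ae_of_all _ hgM)) (hg_int.const_mul c), integral_const_mul,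
      hg0, mul_zero, sub_zero]
  calc |∫ x, f x * g x ∂μ| = |∫ x, (f x - c) * g x ∂μ| := by rw [hshift]
    _ ≤ ∫ x, |(f x - c) * g x| ∂μ := abs_integral_le_integral_abs
    _ ≤ ∫ x, (f x - c) * M ∂μ := integral_mono hfcg.abs (hfc.mul_const M) fun x ↦ by
        rw [abs_mul, abs_of_nonneg (sub_nonneg.2 (hcf x))]
        exact mul_le_mul_of_nonneg_left (hgM x) (sub_nonneg.2 (hcf x))
    _ = (∫ x, f x ∂μ - c * μ.real univ) * M := by
        rw [integral_mul_const, integral_sub hf (integrable_const c), integral_const, smul_eq_mul,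
          mul_comm c]

structure IsSymmDensitySemigroup (p : ℝ → ℝ → ℝ) : Prop where
  measurable : ∀ t, 0 < t → Measurable (p t)
  nonneg : ∀ t, 0 < t → ∀ u, 0 ≤ p t u
  even : ∀ t, 0 < t → ∀ u, p t (-u) = p t u
  integral_eq_one : ∀ t, 0 < t → ∫ u, p t u = 1
  bddAbove : ∀ t, 0 < t → ∃ C : ℝ, ∀ u, p t u ≤ C
  add : ∀ s t : ℝ, 0 < s → 0 < t → ∀ u, p (s + t) u = ∫ v, p s v * p t (u - v)
  summable : ∀ t, 0 < t → ∀ u : ℝ, Summable fun k : ℤ ↦ p t (u - 4 * k)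

/-- The `ℝ≥0∞`-valued `P̄`: for it Tonelli and reindexing of sums need no side conditions. -/
noncomputable def ePbar (p : ℝ → ℝ → ℝ) (t u : ℝ) : ℝ≥0∞ :=
  ∑' k : ℤ, ENNReal.ofReal (p t (u - 4 * k))

theorem Pbar_periodic (p : ℝ → ℝ → ℝ) (t : ℝ) : Function.Periodic (Pbar p t) 4 :=
  Function.periodic_tsum_comp_sub_int_mul (p t) 4

theorem ePbar_periodic (p : ℝ → ℝ → ℝ) (t : ℝ) : Function.Periodic (ePbar p t) 4 :=
  Function.periodic_tsum_comp_sub_int_mul (fun u ↦ ENNReal.ofReal (p t u)) 4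

namespace IsSymmDensitySemigroup

variable {p : ℝ → ℝ → ℝ} {s t : ℝ}

theorem integrable (hp : IsSymmDensitySemigroup p) (ht : 0 < t) : Integrable (p t) :=
  Integrable.of_integral_ne_zero (by rw [hp.integral_eq_one t ht]; exact one_ne_zero)

theorem hasSum_Pbar (hp : IsSymmDensitySemigroup p) (ht : 0 < t) (u : ℝ) :
    HasSum (fun k : ℤ ↦ p t (u - 4 * k)) (Pbar p t u) :=
  (hp.summable t ht u).hasSum

theorem ofReal_Pbar (hp : IsSymmDensitySemigroup p) (ht : 0 < t) (u : ℝ) :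
    ENNReal.ofReal (Pbar p t u) = ePbar p t u :=
  ENNReal.ofReal_tsum_of_nonneg (fun _ ↦ hp.nonneg t ht _) (hp.summable t ht u)

theorem Pbar_nonneg (hp : IsSymmDensitySemigroup p) (ht : 0 < t) (u : ℝ) : 0 ≤ Pbar p t u :=
  tsum_nonneg fun _ ↦ hp.nonneg t ht _

theorem Pbar_eq_toReal (hp : IsSymmDensitySemigroup p) (ht : 0 < t) (u : ℝ) :
    Pbar p t u = (ePbar p t u).toReal := by
  rw [← hp.ofReal_Pbar ht, ENNReal.toReal_ofReal (hp.Pbar_nonneg ht u)]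

theorem ePbar_ne_top (hp : IsSymmDensitySemigroup p) (ht : 0 < t) (u : ℝ) : ePbar p t u ≠ ⊤ := by
  rw [← hp.ofReal_Pbar ht]
  exact ENNReal.ofReal_ne_top

theorem measurable_ePbar (hp : IsSymmDensitySemigroup p) (ht : 0 < t) :
    Measurable (ePbar p t) :=
  .tsum fun _ ↦ ((hp.measurable t ht).comp (measurable_id.sub_const _)).ennreal_ofReal

theorem ePbar_neg (hp : IsSymmDensitySemigroup p) (ht : 0 < t) (u : ℝ) :
    ePbar p t (-u) = ePbar p t u := by
  unfold ePbar
  rw [← (Equiv.neg ℤ).tsum_eq]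
  refine tsum_congr fun k ↦ ?_
  rw [Equiv.neg_apply, Int.cast_neg, ← hp.even t ht (u - 4 * k)]
  congr 2
  ring

theorem setLIntegral_ePbar (hp : IsSymmDensitySemigroup p) (ht : 0 < t) :
    ∫⁻ x in Ioc (-2) 2, ePbar p t x = 1 := by
  have hmeas (k : ℤ) : AEMeasurable fun x ↦ ENNReal.ofReal (p t (x - 4 * k)) :=
    ((hp.measurable t ht).comp (measurable_id.sub_const _)).ennreal_ofReal.aemeasurable
  unfold ePbar
  rw [lintegral_tsum fun k ↦ (hmeas k).restrict]
  have htile := lintegral_eq_tsum_setLIntegral_Ioc (by norm_num : (0 : ℝ) < 4) (-2)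
    fun x ↦ ENNReal.ofReal (p t x)
  norm_num at htile
  rw [← htile, ← ofReal_integral_eq_lintegral_ofReal (hp.integrable ht)
    (ae_of_all _ (hp.nonneg t ht)), hp.integral_eq_one t ht, ENNReal.ofReal_one]

theorem ofReal_apply_add_eq_lintegral (hp : IsSymmDensitySemigroup p) (hs : 0 < s) (ht : 0 < t)
    (u : ℝ) :
    ENNReal.ofReal (p (s + t) u)
      = ∫⁻ v, ENNReal.ofReal (p s v) * ENNReal.ofReal (p t (u - v)) := by
  obtain ⟨C, hC⟩ := hp.bddAbove t ht
  have hmeas : AEStronglyMeasurable (fun v ↦ p t (u - v)) :=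
    ((hp.measurable t ht).comp (measurable_const.sub measurable_id)).aestronglyMeasurable
  have hint : Integrable fun v ↦ p s v * p t (u - v) :=
    (hp.integrable hs).mul_bdd hmeas (ae_of_all _ fun v ↦ by
      rw [Real.norm_of_nonneg (hp.nonneg t ht _)]
      exact hC _)
  rw [hp.add s t hs ht u, ofReal_integral_eq_lintegral_ofReal hint
    (ae_of_all _ fun v ↦ mul_nonneg (hp.nonneg s hs v) (hp.nonneg t ht _))]
  exact lintegral_congr fun v ↦ ENNReal.ofReal_mul (hp.nonneg s hs v)

theorem ePbar_add_eq_lintegral (hp : IsSymmDensitySemigroup p) (hs : 0 < s) (ht : 0 < t) (u : ℝ) :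
    ePbar p (s + t) u = ∫⁻ v, ENNReal.ofReal (p s v) * ePbar p t (u - v) := by
  have hmeas (k : ℤ) : AEMeasurable fun v ↦
      ENNReal.ofReal (p s v) * ENNReal.ofReal (p t (u - 4 * k - v)) :=
    ((hp.measurable s hs).ennreal_ofReal.mul ((hp.measurable t ht).comp
      (measurable_const.sub measurable_id)).ennreal_ofReal).aemeasurable
  unfold ePbar
  simp_rw [hp.ofReal_apply_add_eq_lintegral hs ht, ← ENNReal.tsum_mul_left]
  rw [← lintegral_tsum hmeas]
  simp_rw [sub_right_comm u]

theorem ePbar_add (hp : IsSymmDensitySemigroup p) (hs : 0 < s) (ht : 0 < t) (u : ℝ) :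
    ePbar p (s + t) u = ∫⁻ v in Ioc (-2) 2, ePbar p s v * ePbar p t (u - v) := by
  have hmeas (k : ℤ) : AEMeasurable (fun v ↦
      ENNReal.ofReal (p s (v - 4 * k)) * ePbar p t (u - v)) (volume.restrict (Ioc (-2) 2)) :=
    (((hp.measurable s hs).comp (measurable_id.sub_const _)).ennreal_ofReal.mul
      ((hp.measurable_ePbar ht).comp (measurable_const.sub measurable_id))).aemeasurable
  have htile := lintegral_eq_tsum_setLIntegral_Ioc (by norm_num : (0 : ℝ) < 4) (-2)
    fun v ↦ ENNReal.ofReal (p s v) * ePbar p t (u - v)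
  norm_num at htile
  have hper (k : ℤ) (v : ℝ) : ePbar p t (u - (v - 4 * k)) = ePbar p t (u - v) := by
    rw [show u - (v - 4 * k) = u - v + k * 4 by ring]
    exact (ePbar_periodic p t).int_mul k _
  simp_rw [hp.ePbar_add_eq_lintegral hs ht, htile, hper, ← lintegral_tsum hmeas,
    ENNReal.tsum_mul_right]
  rfl

theorem ePbar_le_ePbar_zero (hp : IsSymmDensitySemigroup p) (ht : 0 < t) (u : ℝ) :
    ePbar p t u ≤ ePbar p t 0 := by
  obtain ⟨h, hh, rfl⟩ : ∃ h, 0 < h ∧ t = h + h := ⟨t / 2, half_pos ht, (add_halves t).symm⟩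
  have hsq : ∫⁻ v in Ioc (-2) 2, ePbar p h (u - v) ^ 2 = ∫⁻ v in Ioc (-2) 2, ePbar p h v ^ 2 := by
    have hrefl :=
      ((ePbar_periodic p h).comp (· ^ 2)).setLIntegral_Ioc_const_sub (by norm_num) (-2) u
    norm_num at hrefl
    exact hrefl
  have hzero : ePbar p (h + h) 0 = ∫⁻ v in Ioc (-2) 2, ePbar p h v ^ 2 := by
    rw [hp.ePbar_add hh hh]
    simp_rw [zero_sub, hp.ePbar_neg hh, sq]
  have key : 2 * ePbar p (h + h) u ≤ 2 * ePbar p (h + h) 0 := calc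
    2 * ePbar p (h + h) u = ∫⁻ v in Ioc (-2) 2, 2 * ePbar p h v * ePbar p h (u - v) := by
      rw [hp.ePbar_add hh hh, ← lintegral_const_mul' _ _ ENNReal.ofNat_ne_top]
      simp_rw [mul_assoc]
    _ ≤ ∫⁻ v in Ioc (-2) 2, (ePbar p h v ^ 2 + ePbar p h (u - v) ^ 2) :=
      lintegral_mono fun v ↦ ENNReal.two_mul_le_add_sq _ _
    _ = 2 * ePbar p (h + h) 0 := by
      rw [lintegral_add_left ((hp.measurable_ePbar hh).pow_const 2), hsq, hzero, two_mul]
  exact (ENNReal.mul_le_mul_iff_right two_ne_zero ENNReal.ofNat_ne_top).1 key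

theorem measurable_Pbar (hp : IsSymmDensitySemigroup p) (ht : 0 < t) : Measurable (Pbar p t) := by
  rw [funext (hp.Pbar_eq_toReal ht)]
  exact (hp.measurable_ePbar ht).ennreal_toReal

theorem setIntegral_Pbar (hp : IsSymmDensitySemigroup p) (ht : 0 < t) :
    ∫ x in Ioc (-2) 2, Pbar p t x = 1 := by
  simp_rw [hp.Pbar_eq_toReal ht]
  rw [integral_toReal (hp.measurable_ePbar ht).aemeasurable
    (ae_of_all _ fun x ↦ (hp.ePbar_ne_top ht x).lt_top), hp.setLIntegral_ePbar ht,
    ENNReal.toReal_one]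

theorem setIntegral_Pbar_sub (hp : IsSymmDensitySemigroup p) (ht : 0 < t) (u : ℝ) :
    ∫ x in Ioc (-2) 2, Pbar p t (u - x) = 1 := by
  simp_rw [hp.Pbar_eq_toReal ht]
  rw [integral_toReal (f := fun x ↦ ePbar p t (u - x))
    ((hp.measurable_ePbar ht).comp (measurable_const.sub measurable_id)).aemeasurable
    (ae_of_all _ fun x ↦ (hp.ePbar_ne_top ht _).lt_top)]
  have h := (ePbar_periodic p t).setLIntegral_Ioc_const_sub (by norm_num) (-2) u
  norm_num at h
  rw [h, hp.setLIntegral_ePbar ht, ENNReal.toReal_one]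

theorem setIntegral_Pbar_mul_Pbar_sub (hp : IsSymmDensitySemigroup p) (hs : 0 < s) (ht : 0 < t)
    (u : ℝ) : ∫ v in Ioc (-2) 2, Pbar p s v * Pbar p t (u - v) = Pbar p (s + t) u := by
  simp_rw [hp.Pbar_eq_toReal hs, hp.Pbar_eq_toReal ht, hp.Pbar_eq_toReal (add_pos hs ht),
    ← ENNReal.toReal_mul]
  rw [integral_toReal (f := fun v ↦ ePbar p s v * ePbar p t (u - v))
    (((hp.measurable_ePbar hs).mul ((hp.measurable_ePbar ht).comp
    (measurable_const.sub measurable_id))).aemeasurable)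
    (ae_of_all _ fun x ↦ ENNReal.mul_lt_top (hp.ePbar_ne_top hs _).lt_top
      (hp.ePbar_ne_top ht _).lt_top), hp.ePbar_add hs ht]

theorem Pbar_le_Pbar_zero (hp : IsSymmDensitySemigroup p) (ht : 0 < t) (u : ℝ) :
    Pbar p t u ≤ Pbar p t 0 := by
  rw [hp.Pbar_eq_toReal ht, hp.Pbar_eq_toReal ht]
  exact ENNReal.toReal_mono (hp.ePbar_ne_top ht 0) (hp.ePbar_le_ePbar_zero ht u)

theorem norm_Pbar_le (hp : IsSymmDensitySemigroup p) (ht : 0 < t) (u : ℝ) :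
    ‖Pbar p t u‖ ≤ Pbar p t 0 := by
  rw [Real.norm_of_nonneg (hp.Pbar_nonneg ht u)]
  exact hp.Pbar_le_Pbar_zero ht u

theorem integrableOn_Pbar (hp : IsSymmDensitySemigroup p) (ht : 0 < t) :
    IntegrableOn (Pbar p t) (Ioc (-2) 2) :=
  Integrable.of_bound (hp.measurable_Pbar ht).aestronglyMeasurable _
    (ae_of_all _ (hp.norm_Pbar_le ht))

theorem integrableOn_Pbar_comp_sub (hp : IsSymmDensitySemigroup p) (ht : 0 < t) (u : ℝ) :
    IntegrableOn (fun v ↦ Pbar p t (u - v)) (Ioc (-2) 2) :=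
  Integrable.of_bound
    ((hp.measurable_Pbar ht).comp (measurable_const.sub measurable_id)).aestronglyMeasurable
    _ (ae_of_all _ fun _ ↦ hp.norm_Pbar_le ht _)

theorem Qinf_le_Pbar (hp : IsSymmDensitySemigroup p) (ht : 0 < t) (u : ℝ) :
    Qinf p t ≤ Pbar p t u := by
  obtain ⟨v, hv, huv⟩ := (Pbar_periodic p t).exists_mem_Ico (by norm_num) u (-2)
  norm_num at hv
  rw [huv]
  exact csInf_le ⟨0, forall_mem_image.2 fun w _ ↦ hp.Pbar_nonneg ht w⟩ (mem_image_of_mem _ hv)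

theorem abs_Pbar_sub_le_sSup (hp : IsSymmDensitySemigroup p) (ht : 0 < t) (u : ℝ) :
    |Pbar p t u - 1 / 4| ≤ sSup ((fun u ↦ |Pbar p t u - 1 / 4|) '' Ico (-2) 2) := by
  have hbdd : BddAbove ((fun u ↦ |Pbar p t u - 1 / 4|) '' Ico (-2) 2) := by
    refine ⟨Pbar p t 0 + 1 / 4, forall_mem_image.2 fun w _ ↦ ?_⟩
    have := hp.Pbar_le_Pbar_zero ht w
    have := hp.Pbar_nonneg ht w
    rw [abs_le]
    constructor <;> linarith
  obtain ⟨v, hv, huv⟩ := (Pbar_periodic p t).exists_mem_Ico (by norm_num) u (-2)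
  norm_num at hv
  rw [huv]
  exact le_csSup hbdd (mem_image_of_mem _ hv)

theorem Pbar_add_sub_eq_setIntegral (hp : IsSymmDensitySemigroup p) (hs : 0 < s) (ht : 0 < t)
    (u : ℝ) : Pbar p (s + t) u - 1 / 4
      = ∫ v in Ioc (-2) 2, Pbar p s v * (Pbar p t (u - v) - 1 / 4) := by
  have hprod : IntegrableOn (fun v ↦ Pbar p s v * Pbar p t (u - v)) (Ioc (-2) 2) :=
    (hp.integrableOn_Pbar hs).mul_bdd (hp.integrableOn_Pbar_comp_sub ht u).aestronglyMeasurable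
      (ae_of_all _ fun _ ↦ hp.norm_Pbar_le ht _)
  simp_rw [mul_sub]
  rw [integral_sub hprod ((hp.integrableOn_Pbar hs).mul_const _), integral_mul_const,
    hp.setIntegral_Pbar_mul_Pbar_sub hs ht, hp.setIntegral_Pbar hs, one_mul]

theorem abs_Pbar_add_sub_le_mul (hp : IsSymmDensitySemigroup p) (hs : 0 < s) (ht : 0 < t) {c M : ℝ}
    (hc : ∀ v, c ≤ Pbar p s v) (hM : ∀ w, |Pbar p t w - 1 / 4| ≤ M) (u : ℝ) :
    |Pbar p (s + t) u - 1 / 4| ≤ (1 - 4 * c) * M := by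
  have hg0 : ∫ v in Ioc (-2) 2, (Pbar p t (u - v) - 1 / 4) = 0 := by
    rw [integral_sub (hp.integrableOn_Pbar_comp_sub ht u) (integrable_const _),
      hp.setIntegral_Pbar_sub ht, setIntegral_const, Real.volume_real_Ioc_of_le (by norm_num)]
    norm_num
  have := abs_integral_mul_le_of_integral_eq_zero (g := fun v ↦ Pbar p t (u - v) - 1 / 4)
    (hp.integrableOn_Pbar hs)
    ((hp.integrableOn_Pbar_comp_sub ht u).sub (integrable_const _)).aestronglyMeasurable hg0 hc
    (fun v ↦ hM (u - v))
  rwa [← hp.Pbar_add_sub_eq_setIntegral hs ht, hp.setIntegral_Pbar hs,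
    measureReal_restrict_apply_univ,
    Real.volume_real_Ioc_of_le (by norm_num), show (2 : ℝ) - -2 = 4 by norm_num, mul_comm c] at this

theorem abs_Pbar_sub_le_pow (hp : IsSymmDensitySemigroup p) (n : ℕ) (ht : n + 1 ≤ t) (u : ℝ) :
    |Pbar p t u - 1 / 4|
      ≤ (1 - 4 * Qinf p 1) ^ n * sSup ((fun u ↦ |Pbar p 1 u - 1 / 4|) '' Ico (-2) 2) := by
  induction n generalizing t u with
  | zero =>
    rw [pow_zero, one_mul]
    rcases (show (1 : ℝ) ≤ t by simpa using ht).eq_or_lt with rfl | ht1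
    · exact hp.abs_Pbar_sub_le_sSup one_pos u
    · have h := hp.abs_Pbar_add_sub_le_mul (sub_pos.2 ht1) one_pos (hp.Pbar_nonneg (sub_pos.2 ht1))
        (hp.abs_Pbar_sub_le_sSup one_pos) u
      rwa [sub_add_cancel, mul_zero, sub_zero, one_mul] at h
  | succ n ih =>
    have ht1 : (n : ℝ) + 1 ≤ t - 1 := by push_cast at ht; linarith
    have h := hp.abs_Pbar_add_sub_le_mul one_pos (by linarith) (hp.Qinf_le_Pbar one_pos) (ih ht1) u
    rwa [add_sub_cancel, ← mul_assoc, ← pow_succ'] at h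

theorem piRefl_eq_Pbar_add_Pbar (hp : IsSymmDensitySemigroup p) (ht : 0 < t) (u : ℝ) :
    piRefl p t u = Pbar p t u + Pbar p t (u - 2) := by
  refine (HasSum.int_even_add_odd ?_ ?_).tsum_eq
  · convert hp.hasSum_Pbar ht u using 3 with k
    push_cast
    ring
  · convert hp.hasSum_Pbar ht (u - 2) using 3 with k
    push_cast
    ring

theorem abs_piRefl_sub_le (hp : IsSymmDensitySemigroup p) (ht : 0 < t) {M : ℝ}
    (hM : ∀ w, |Pbar p t w - 1 / 4| ≤ M) (u : ℝ) : |piRefl p t u - 1 / 2| ≤ 2 * M := by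
  rw [hp.piRefl_eq_Pbar_add_Pbar ht u, two_mul,
    show Pbar p t u + Pbar p t (u - 2) - 1 / 2
      = (Pbar p t u - 1 / 4) + (Pbar p t (u - 2) - 1 / 4) by ring]
  exact (abs_add_le _ _).trans (add_le_add (hM _) (hM _))

end IsSymmDensitySemigroup

theorem piReflR_eq_piRefl {a : ℝ} (ha : 0 < a) {p : ℝ → ℝ → ℝ}
    (hscal : ∀ t, 0 < t → ∀ u : ℝ, p t u = t ^ (-1 / a) * p 1 (t ^ (-1 / a) * u))
    {r t : ℝ} (hr : 0 < r) (ht : 0 < t) (u : ℝ) :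
    piReflR p t r u = (1 / r) * piRefl p (t * r ^ (-a)) (u / r) := by
  have hm : 0 < r ^ (-a) := Real.rpow_pos_of_pos hr _
  have hscale : (t * r ^ (-a)) ^ (-1 / a) = t ^ (-1 / a) * r := by
    rw [Real.mul_rpow ht.le hm.le, ← Real.rpow_mul hr.le,
      show -a * (-1 / a) = 1 by field_simp, Real.rpow_one]
  unfold piReflR piRefl
  rw [← tsum_mul_left]
  refine tsum_congr fun k ↦ ?_
  rw [hscal t ht, hscal _ (mul_pos ht hm), hscale]
  field_simp

theorem lemma2_general (a : ℝ) (ha : 0 < a) (p : ℝ → ℝ → ℝ)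
    (hmeas : ∀ t, 0 < t → Measurable (p t))
    (hnn : ∀ t, 0 < t → ∀ u, 0 ≤ p t u)
    (heven : ∀ t, 0 < t → ∀ u, p t (-u) = p t u)
    (hone : ∀ t, 0 < t → ∫ u, p t u = 1)
    (hbdd : ∀ t, 0 < t → ∃ C : ℝ, ∀ u, p t u ≤ C)
    (hconv : ∀ s t : ℝ, 0 < s → 0 < t → ∀ u, p (s + t) u = ∫ v, p s v * p t (u - v))
    (hsum : ∀ t, 0 < t → ∀ u : ℝ, Summable fun k : ℤ => p t (u - 4 * k))
    (hscal : ∀ t, 0 < t → ∀ u : ℝ, p t u = t ^ (-1 / a) * p 1 (t ^ (-1 / a) * u))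
    (r : ℝ) (hr : 0 < r) (t : ℝ) (ht : 0 < t) :
    (∀ u ∈ Set.Icc (-r) r, piReflR p t r u = (1 / r) * piRefl p (t * r ^ (-a)) (u / r)) ∧
    (1 ≤ t * r ^ (-a) →
      sSup ((fun u => |piReflR p t r u - 1 / (2 * r)|) '' Set.Icc (-r) r)
        ≤ (2 / r) * (1 - 4 * Qinf p 1) ^ (⌊t * r ^ (-a)⌋₊ - 1) *
            sSup ((fun u => |Pbar p 1 u - 1 / 4|) '' Set.Ico (-2 : ℝ) 2)) := by
  have hp : IsSymmDensitySemigroup p := ⟨hmeas, hnn, heven, hone, hbdd, hconv, hsum⟩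
  have hscaled := piReflR_eq_piRefl ha hscal hr ht
  refine ⟨fun u _ ↦ hscaled u, fun hτ ↦ ?_⟩
  set τ := t * r ^ (-a)
  have hK : 1 ≤ ⌊τ⌋₊ := Nat.one_le_floor_iff _ |>.2 hτ
  have hbound := hp.abs_Pbar_sub_le_pow (t := τ) (⌊τ⌋₊ - 1)
    (by rw [Nat.cast_sub hK, Nat.cast_one, sub_add_cancel]; exact Nat.floor_le (by linarith))
  refine csSup_le ((nonempty_Icc.2 (by linarith)).image _) (forall_mem_image.2 fun u _ ↦ ?_)
  calc |piReflR p t r u - 1 / (2 * r)| = |1 / r * (piRefl p τ (u / r) - 1 / 2)| := by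
        rw [hscaled u, mul_sub, one_div_mul_one_div, mul_comm r]
    _ = 1 / r * |piRefl p τ (u / r) - 1 / 2| := by rw [abs_mul, abs_of_pos (one_div_pos.2 hr)]
    _ ≤ 1 / r * (2 * _) := by gcongr; exact hp.abs_piRefl_sub_le (by linarith) hbound _
    _ = _ := by ring

/-- (Lemma 2) For `r > 0`, `m = r^{-a}`: `π_{t,r}(u) = (1/r) π_{tm}(u/r)` on `[-r,r]`,
and for `tm ≥ 1`, with `K = ⌊tm⌋`,
`sup_{u ∈ [-r,r]} |π_{t,r}(u) - 1/(2r)| ≤ (2/r)(1 - 4Q₁)^(K-1) sup_{u ∈ [-2,2)} |P̄₁(u) - 1/4|`. -/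
theorem lemma2 (a : ℝ) (ha : 0 < a) (ha2 : a ≤ 2) (p : ℝ → ℝ → ℝ)
    (hmeas : ∀ t, 0 < t → Measurable (p t))
    (hnn : ∀ t, 0 < t → ∀ u, 0 ≤ p t u)
    (heven : ∀ t, 0 < t → ∀ u, p t (-u) = p t u)
    (hone : ∀ t, 0 < t → ∫ u, p t u = 1)
    (hbdd : ∀ t, 0 < t → ∃ C : ℝ, ∀ u, p t u ≤ C)
    (hconv : ∀ s t : ℝ, 0 < s → 0 < t → ∀ u, p (s + t) u = ∫ v, p s v * p t (u - v))
    (hsum : ∀ t, 0 < t → ∀ u : ℝ, Summable fun k : ℤ => p t (u - 4 * k))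
    (hQ : ∀ t, 0 < t → 0 < Qinf p t)
    (hscal : ∀ t, 0 < t → ∀ u : ℝ, p t u = t ^ (-1 / a) * p 1 (t ^ (-1 / a) * u))
    (r : ℝ) (hr : 0 < r) (t : ℝ) (ht : 0 < t) :
    (∀ u ∈ Set.Icc (-r) r, piReflR p t r u = (1 / r) * piRefl p (t * r ^ (-a)) (u / r)) ∧
    (1 ≤ t * r ^ (-a) →
      sSup ((fun u => |piReflR p t r u - 1 / (2 * r)|) '' Set.Icc (-r) r)
        ≤ (2 / r) * (1 - 4 * Qinf p 1) ^ (⌊t * r ^ (-a)⌋₊ - 1) *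
            sSup ((fun u => |Pbar p 1 u - 1 / 4|) '' Set.Ico (-2 : ℝ) 2)) :=
  lemma2_general a ha p hmeas hnn heven hone hbdd hconv hsum hscal r hr t ht
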